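/- Let (X,d) be a Robinson space with a compatible order <'. Let S ⊆ X be an mmodule of (X,d) that is an interval of <', and let <_S be a compatible order of the subspace (S,d). Define a total order < on X by: x < y iff either x,y ∈ S and x <_S y, or not both x,y belong to S and x <' y (i.e., < is obtained from <' by reordering the elements of S according to <_S). Then < is a compatible order of (X,d). -/

import Mathlib

structure Dissim (X : Type*) where
  d : X → X → ℝ
  symm : ∀ x y, d x y = d y x
  nonneg : ∀ x y, 0 ≤ d x y
  self : ∀ x, d x x = 0

variable {X : Type*}

def Compatible (D : Dissim X) (lt : X → X → Prop) : Prop :=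
  ∀ x y z : X, lt x y → lt y z → D.d x y ≤ D.d x z ∧ D.d y z ≤ D.d x z

def IsCompatOrder (D : Dissim X) (lt : X → X → Prop) : Prop :=
  IsStrictTotalOrder X lt ∧ Compatible D lt

def Robinson (D : Dissim X) : Prop :=
  ∃ lt : X → X → Prop, IsCompatOrder D lt

def IsMmodule (D : Dissim X) (M : Set X) : Prop :=
  ∀ z ∉ M, ∀ x ∈ M, ∀ y ∈ M, D.d z x = D.d z y

def IsInterval (lt : X → X → Prop) (I : Set X) : Prop :=
  ∀ a b c : X, lt a b → lt b c → a ∈ I → c ∈ I → b ∈ I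

def IsBlock (D : Dissim X) (Y : Set X) : Prop :=
  ∀ lt : X → X → Prop, IsCompatOrder D lt → IsInterval lt Y

noncomputable def diam (D : Dissim X) (Y : Set X) : ℝ :=
  sSup (Set.image2 D.d Y Y)

def Gdelta (D : Dissim X) (δ : ℝ) : SimpleGraph X where
  Adj x y := x ≠ y ∧ D.d x y ≠ δ
  symm := by
    constructor; rintro x y ⟨hxy, hd⟩
    exact ⟨hxy.symm, by rw [D.symm]; exact hd⟩
  loopless := by constructor; rintro x ⟨h, -⟩; exact h rfl

def Gle (D : Dissim X) (δ : ℝ) : SimpleGraph X where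
  Adj x y := x ≠ y ∧ D.d x y ≤ δ
  symm := by
    constructor; rintro x y ⟨hxy, hd⟩
    exact ⟨hxy.symm, by rw [D.symm]; exact hd⟩
  loopless := by constructor; rintro x ⟨h, -⟩; exact h rfl

def Glt (D : Dissim X) (δ : ℝ) : SimpleGraph X where
  Adj x y := x ≠ y ∧ D.d x y < δ
  symm := by
    constructor; rintro x y ⟨hxy, hd⟩
    exact ⟨hxy.symm, by rw [D.symm]; exact hd⟩
  loopless := by constructor; rintro x ⟨h, -⟩; exact h rfl

def IsCompOf {V : Type*} (G : SimpleGraph V) (C : Set V) : Prop :=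
  ∃ x : V, C = {y | G.Reachable x y}

def MMax (D : Dissim X) : Set (Set X) :=
  {M | IsMmodule D M ∧ M ≠ Set.univ ∧
    ∀ M' : Set X, IsMmodule D M' → M' ≠ Set.univ → M ⊆ M' → M = M'}

def IsPartition {α : Type*} (P : Set (Set α)) : Prop :=
  (∀ A ∈ P, A.Nonempty) ∧
  (∀ A ∈ P, ∀ B ∈ P, A ≠ B → Disjoint A B) ∧
  ⋃₀ P = Set.univ

def IsCopartition {α : Type*} (P : Set (Set α)) : Prop :=
  IsPartition ((fun M => Mᶜ) '' P)

def SimpleGraph.restrictTo {V : Type*} (G : SimpleGraph V) (S : Set V) : SimpleGraph V where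
  Adj x y := x ∈ S ∧ y ∈ S ∧ G.Adj x y
  symm := by constructor; rintro x y ⟨hx, hy, h⟩; exact ⟨hy, hx, h.symm⟩
  loopless := by constructor; rintro x ⟨-, -, h⟩; exact G.irrefl h

def ConnectedWithin {V : Type*} (G : SimpleGraph V) (S : Set V) : Prop :=
  S.Nonempty ∧ ∀ x ∈ S, ∀ y ∈ S, (G.restrictTo S).Reachable x y

def IsCompWithin {V : Type*} (G : SimpleGraph V) (S : Set V) (C : Set V) : Prop :=
  ∃ x ∈ S, C = {y | (G.restrictTo S).Reachable x y}

def IsStrictTotalOrderOn {α : Type*} (S : Set α) (lt : α → α → Prop) : Prop :=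
  (∀ x ∈ S, ¬ lt x x) ∧
  (∀ x ∈ S, ∀ y ∈ S, ∀ z ∈ S, lt x y → lt y z → lt x z) ∧
  (∀ x ∈ S, ∀ y ∈ S, x ≠ y → (lt x y ∨ lt y x) ∧ ¬ (lt x y ∧ lt y x))

def CompatibleOn (D : Dissim X) (S : Set X) (lt : X → X → Prop) : Prop :=
  ∀ x ∈ S, ∀ y ∈ S, ∀ z ∈ S, lt x y → lt y z → D.d x y ≤ D.d x z ∧ D.d y z ≤ D.d x z

def IsCompatOrderOn (D : Dissim X) (S : Set X) (lt : X → X → Prop) : Prop :=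
  IsStrictTotalOrderOn S lt ∧ CompatibleOn D S lt

def FlatOn (D : Dissim X) (S : Set X) : Prop :=
  ∃ lt : X → X → Prop, IsCompatOrderOn D S lt ∧ (∃ x ∈ S, ∃ y ∈ S, lt x y) ∧
    ∀ lt' : X → X → Prop, IsCompatOrderOn D S lt' →
      (∀ x ∈ S, ∀ y ∈ S, (lt' x y ↔ lt x y)) ∨ (∀ x ∈ S, ∀ y ∈ S, (lt' x y ↔ lt y x))

def Flat (D : Dissim X) : Prop :=
  ∃ lt : X → X → Prop, IsCompatOrder D lt ∧ (∃ x y : X, lt x y) ∧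
    ∀ lt' : X → X → Prop, IsCompatOrder D lt' →
      (∀ x y : X, lt' x y ↔ lt x y) ∨ (∀ x y : X, lt' x y ↔ lt y x)

def IsCopointAt (D : Dissim X) (p : X) (C : Set X) : Prop :=
  IsMmodule D C ∧ C.Nonempty ∧ p ∉ C ∧
  ∀ C' : Set X, IsMmodule D C' → p ∉ C' → C ⊆ C' → C = C'

def bigGraph (D : Dissim X) (δ : ℝ) (I : Set (Set X)) : SimpleGraph (Set X) where
  Adj C C' := C ∈ I ∧ C' ∈ I ∧ C ≠ C' ∧ ∃ x ∈ C, ∃ y ∈ C', δ < D.d x y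
  symm := by
    constructor; rintro C C' ⟨hC, hC', hne, x, hx, y, hy, hd⟩
    exact ⟨hC', hC, hne.symm, y, hy, x, hx, by rw [D.symm]; exact hd⟩
  loopless := by constructor; rintro C ⟨-, -, hne, -⟩; exact hne rfl

/-!
Because `S` is an interval of `<'`, each point outside `S` lies on the same side of all of `S`;
this keeps the reordered relation transitive. For compatibility, the only triples that neither
`<'` nor `<_S` handles directly consist of two points `x, y ∈ S` and one point `z ∉ S` on the
same side of both. The mmodule property gives `d(x,z) = d(y,z)`, and compatibility of `<'` gives
`d(x,y) ≤ max (d(x,z)) (d(y,z))`.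
-/

def reorderOn (S : Set X) (ltS lt' : X → X → Prop) (x y : X) : Prop :=
  (x ∈ S ∧ y ∈ S ∧ ltS x y) ∨ (¬ (x ∈ S ∧ y ∈ S) ∧ lt' x y)

namespace IsInterval

variable {lt : X → X → Prop} [Std.Trichotomous lt] {S : Set X} {a b c : X}

theorem lt_of_lt_of_notMem (hS : IsInterval lt S) (hbc : lt b c) (hc : c ∉ S)
    (ha : a ∈ S) (hb : b ∈ S) : lt a c := by
  rcases trichotomous_of lt a c with h | rfl | h
  · exact h
  · exact absurd ha hc
  · exact absurd (hS b c a hbc h hb ha) hc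

theorem lt_of_notMem_of_lt (hS : IsInterval lt S) (hcb : lt c b) (hc : c ∉ S)
    (ha : a ∈ S) (hb : b ∈ S) : lt c a := by
  rcases trichotomous_of lt c a with h | rfl | h
  · exact h
  · exact absurd ha hc
  · exact absurd (hS a c b h hcb ha hb) hc

end IsInterval

namespace Compatible

variable {D : Dissim X} {lt : X → X → Prop}

theorem swap (h : Compatible D lt) : Compatible D (Function.swap lt) := fun x y z hyx hzy => by
  obtain ⟨hzy_le, hyx_le⟩ := h z y x hzy hyx
  rw [D.symm x y, D.symm x z, D.symm y z]
  exact ⟨hyx_le, hzy_le⟩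

theorem dist_le_max_of_lt_of_lt [Std.Trichotomous lt] (h : Compatible D lt) {x y z : X}
    (hxz : lt x z) (hyz : lt y z) : D.d x y ≤ max (D.d x z) (D.d y z) := by
  rcases trichotomous_of lt x y with hxy | rfl | hyx
  · exact (h x y z hxy hyz).1.trans (le_max_left _ _)
  · rw [D.self]
    exact (D.nonneg _ _).trans (le_max_left _ _)
  · rw [D.symm]
    exact (h y x z hyx hxz).1.trans (le_max_right _ _)

end Compatible

section reorderOn

variable {S : Set X} {ltS lt' : X → X → Prop}

theorem reorderOn_trans [IsTrans X lt'] [Std.Trichotomous lt'] (hltS : IsStrictTotalOrderOn S ltS)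
    (hInt : IsInterval lt' S) {x y z : X} :
    reorderOn S ltS lt' x y → reorderOn S ltS lt' y z → reorderOn S ltS lt' x z := by
  rintro (⟨hx, hy, hxy⟩ | ⟨hxy_nS, hxy⟩) (⟨hy, hz, hyz⟩ | ⟨hyz_nS, hyz⟩)
  · exact .inl ⟨hx, hz, hltS.2.1 x hx y hy z hz hxy hyz⟩
  · have hz : z ∉ S := fun hz => hyz_nS ⟨hy, hz⟩
    exact .inr ⟨fun h => hz h.2, hInt.lt_of_lt_of_notMem hyz hz hx hy⟩
  · have hx : x ∉ S := fun hx => hxy_nS ⟨hx, hy⟩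
    exact .inr ⟨fun h => hx h.1, hInt.lt_of_notMem_of_lt hxy hx hz hy⟩
  · exact .inr ⟨fun ⟨hx, hz⟩ => hxy_nS ⟨hx, hInt x y z hxy hyz hx hz⟩, _root_.trans hxy hyz⟩

theorem isStrictTotalOrder_reorderOn [IsStrictTotalOrder X lt']
    (hltS : IsStrictTotalOrderOn S ltS) (hInt : IsInterval lt' S) :
    IsStrictTotalOrder X (reorderOn S ltS lt') where
  irrefl x := by
    rintro (⟨hx, -, hxx⟩ | ⟨-, hxx⟩)
    exacts [hltS.1 x hx hxx, irrefl x hxx]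
  trans _ _ _ := reorderOn_trans hltS hInt
  trichotomous x y hxy hyx := by
    by_cases hS : x ∈ S ∧ y ∈ S
    · by_contra hne
      rcases (hltS.2.2 x hS.1 y hS.2 hne).1 with h | h
      exacts [hxy (.inl ⟨hS.1, hS.2, h⟩), hyx (.inl ⟨hS.2, hS.1, h⟩)]
    · exact Std.Trichotomous.trichotomous (r := lt') x y (fun h => hxy (.inr ⟨hS, h⟩))
        (fun h => hyx (.inr ⟨fun h' => hS ⟨h'.2, h'.1⟩, h⟩))

theorem compatible_reorderOn {D : Dissim X} [Std.Trichotomous lt'] (hC' : Compatible D lt')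
    (hS : IsMmodule D S) (hInt : IsInterval lt' S) (hCS : CompatibleOn D S ltS) :
    Compatible D (reorderOn S ltS lt') := by
  rintro x y z (⟨hx, hy, hxy⟩ | ⟨hxy_nS, hxy⟩) (⟨hy, hz, hyz⟩ | ⟨hyz_nS, hyz⟩)
  · exact hCS x hx y hy z hz hxy hyz
  · have hz : z ∉ S := fun hz => hyz_nS ⟨hy, hz⟩
    have hdist : D.d x z = D.d y z := by
      rw [D.symm x z, D.symm y z]
      exact hS z hz x hx y hy
    have hle := hC'.dist_le_max_of_lt_of_lt (hInt.lt_of_lt_of_notMem hyz hz hx hy) hyz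
    rw [← hdist, max_self] at hle
    exact ⟨hle, hdist.ge⟩
  · have hx : x ∉ S := fun hx => hxy_nS ⟨hx, hy⟩
    have hdist : D.d x y = D.d x z := hS x hx y hy z hz
    have hle := hC'.swap.dist_le_max_of_lt_of_lt hxy (hInt.lt_of_notMem_of_lt hxy hx hz hy)
    rw [D.symm y x, D.symm z x, hdist, max_self] at hle
    exact ⟨hdist.le, hle⟩
  · exact hC' x y z hxy hyz

end reorderOn

theorem stmt0_general (D : Dissim X)
    (lt' : X → X → Prop) (h' : IsCompatOrder D lt')
    (S : Set X) (hS : IsMmodule D S) (hInt : IsInterval lt' S)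
    (ltS : X → X → Prop) (hltS : IsCompatOrderOn D S ltS)
    (lt : X → X → Prop)
    (hlt : ∀ x y : X, lt x y ↔
      ((x ∈ S ∧ y ∈ S ∧ ltS x y) ∨ (¬ (x ∈ S ∧ y ∈ S) ∧ lt' x y))) :
    IsCompatOrder D lt := by
  obtain ⟨hTotal', hC'⟩ := h'
  have hlt_eq : lt = reorderOn S ltS lt' := funext₂ fun x y => propext (hlt x y)
  subst hlt_eq
  exact ⟨isStrictTotalOrder_reorderOn hltS.1 hInt, compatible_reorderOn hC' hS hInt hltS.2⟩

/-- reordering an mmodule that is an interval of a compatible order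
by a compatible order of the subspace yields a compatible order. -/
theorem stmt0 [Fintype X] [Nonempty X] (D : Dissim X)
    (lt' : X → X → Prop) (h' : IsCompatOrder D lt')
    (S : Set X) (hS : IsMmodule D S) (hInt : IsInterval lt' S)
    (ltS : X → X → Prop) (hltS : IsCompatOrderOn D S ltS)
    (lt : X → X → Prop)
    (hlt : ∀ x y : X, lt x y ↔
      ((x ∈ S ∧ y ∈ S ∧ ltS x y) ∨ (¬ (x ∈ S ∧ y ∈ S) ∧ lt' x y))) :
    IsCompatOrder D lt :=
  stmt0_general D lt' h' S hS hInt ltS hltS lt hlt
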